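/- Assume S(A) = A Q_m Aᵀ is positive definite with orthonormal eigenvectors u₁,…,uₙ and eigenvalues λ₁,…,λₙ > 0, and let 𝒳 = 𝒳_d ∩ ℋ be nonempty. Define b_j = min{ ‖w‖₂ / (2√λ_j), ψ_ℋ(u_j) }, where ψ_ℋ(v) = h_ℋ(v) + h_ℋ(−v) and h_ℋ is the support function of ℋ. Then 𝒳 is contained in an orthogonal box with axes u₁,…,uₙ and side lengths b₁,…,bₙ, i.e., there exist reals c₁,…,cₙ such that every x ∈ 𝒳 satisfies c_j ≤ u_jᵀ x ≤ c_j + b_j for all j; consequently diam(𝒳) ≤ (Σⱼ b_j²)^{1/2}. -/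

import Mathlib

/-!
Fix a direction `u_j`. For `x, y ∈ 𝒳_d` with offsets `α, β`, the residuals
`z = Q_m ω − 2 Q_m Aᵀ x + α𝟙` lie in the box `[ξ⁻, ξ⁺]`, so `‖z_x − z_y‖ ≤ ‖w‖`. The centering
projector annihilates `𝟙`, hence `Q_m (z_x − z_y) = −2 Q_m Aᵀ (x − y)`, and as `Q_m` is an
orthogonal projection, `4 (x − y)ᵀ S(A) (x − y) = ‖2 Q_m Aᵀ (x − y)‖² ≤ ‖w‖²`. Since `u_j` is a
unit eigenvector of the positive semidefinite `S(A)`, the left side is at least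
`4 λ_j ⟪u_j, x − y⟫²`. On the bounded set `ℋ` the spread of `⟪u_j, ·⟫` is at most
`h_ℋ(u_j) + h_ℋ(−u_j)`. So `⟪u_j, ·⟫` varies by at most `b_j` on `𝒳`; its infimum gives `c_j`,
and Parseval in the orthonormal basis `u` bounds the diameter.
-/

open Matrix
open scoped InnerProductSpace

noncomputable section

/-- Reinterpret a plain vector as a point of Euclidean space (with the ℓ² norm). -/
def toE {n : ℕ} (v : Fin n → ℝ) : EuclideanSpace ℝ (Fin n) := WithLp.toLp 2 v

/-- The all-ones m×m matrix 𝟙𝟙ᵀ. -/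
def onesM (m : ℕ) : Matrix (Fin m) (Fin m) ℝ := Matrix.of fun _ _ => 1

/-- The centering projector Q_m = I_m − (1/m)𝟙𝟙ᵀ. -/
def Qm (m : ℕ) : Matrix (Fin m) (Fin m) ℝ := 1 - (m : ℝ)⁻¹ • onesM m

/-- The i-th anchor a⁽ⁱ⁾, i.e. the i-th column of A, as a Euclidean point. -/
def colE {n m : ℕ} (A : Matrix (Fin n) (Fin m) ℝ) (i : Fin m) : EuclideanSpace ℝ (Fin n) :=
  toE fun k => A k i

/-- The vector ω ∈ ℝᵐ with entries ωᵢ = ‖a⁽ⁱ⁾‖₂². -/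
def omegaV {n m : ℕ} (A : Matrix (Fin n) (Fin m) ℝ) : Fin m → ℝ := fun i => ‖colE A i‖ ^ 2

/-- The polyhedral localization set
𝒳_d = {x : ∃ α, ξ⁻ ≤ Q_m ω − 2 Q_m Aᵀ x + α𝟙 ≤ ξ⁺}. -/
def Xd {n m : ℕ} (A : Matrix (Fin n) (Fin m) ℝ) (xim xip : Fin m → ℝ) :
    Set (EuclideanSpace ℝ (Fin n)) :=
  {x | ∃ α : ℝ,
      xim ≤ (Qm m).mulVec (omegaV A) - (2 : ℝ) • ((Qm m * Aᵀ).mulVec x) + α • (1 : Fin m → ℝ) ∧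
      (Qm m).mulVec (omegaV A) - (2 : ℝ) • ((Qm m * Aᵀ).mulVec x) + α • (1 : Fin m → ℝ) ≤ xip}

/-- The intersection ℋ of the upper-range balls: ℋ = ∩ᵢ {x : ‖x − a⁽ⁱ⁾‖₂ ≤ √ξᵢ⁺}. -/
def Hset {n m : ℕ} (A : Matrix (Fin n) (Fin m) ℝ) (xip : Fin m → ℝ) :
    Set (EuclideanSpace ℝ (Fin n)) :=
  {x | ∀ i, ‖x - colE A i‖ ≤ Real.sqrt (xip i)}

/-- Support function h_Ω(v) = sup_{x∈Ω} vᵀx. -/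
def suppF {n : ℕ} (Ω : Set (EuclideanSpace ℝ (Fin n))) (v : EuclideanSpace ℝ (Fin n)) : ℝ :=
  sSup ((fun x => ⟪v, x⟫_ℝ) '' Ω)

/-- ψ_Ω(v) = h_Ω(v) + h_Ω(−v). -/
def psiH {n : ℕ} (Ω : Set (EuclideanSpace ℝ (Fin n))) (v : EuclideanSpace ℝ (Fin n)) : ℝ :=
  suppF Ω v + suppF Ω (-v)

/-- Directional width width_v(Ω) = sup_{x∈Ω} vᵀx − inf_{x∈Ω} vᵀx. -/
def dwidth {n : ℕ} (v : EuclideanSpace ℝ (Fin n)) (Ω : Set (EuclideanSpace ℝ (Fin n))) : ℝ :=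
  sSup ((fun x => ⟪v, x⟫_ℝ) '' Ω) - sInf ((fun x => ⟪v, x⟫_ℝ) '' Ω)

/-- The aggregated squared radius ρ(p)² = pᵀ(ξ⁺ − ω) + ‖Ap‖₂². -/
def rho2 {n m : ℕ} (A : Matrix (Fin n) (Fin m) ℝ) (xip : Fin m → ℝ) (p : Fin m → ℝ) : ℝ :=
  p ⬝ᵥ (xip - omegaV A) + ‖toE (A.mulVec p)‖ ^ 2

lemma exists_forall_le_and_le_add_of_forall_sub_le {α ι : Type*} {Ω : Set α} {f : ι → α → ℝ}
    {b : ι → ℝ} (h : ∀ x ∈ Ω, ∀ y ∈ Ω, ∀ j, f j x - f j y ≤ b j) :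
    ∃ c : ι → ℝ, ∀ x ∈ Ω, ∀ j, c j ≤ f j x ∧ f j x ≤ c j + b j := by
  refine ⟨fun j => sInf (f j '' Ω), fun x hx j => ⟨?_, ?_⟩⟩
  · refine csInf_le ⟨f j x - b j, ?_⟩ (Set.mem_image_of_mem _ hx)
    rintro _ ⟨y, hy, rfl⟩
    linarith [h x hx y hy j]
  · suffices f j x - b j ≤ sInf (f j '' Ω) by linarith
    refine le_csInf (Set.image_nonempty.mpr ⟨x, hx⟩) ?_
    rintro _ ⟨y, hy, rfl⟩
    linarith [h x hx y hy j]

lemma ediam_le_of_forall_inner_sub_le {ι E : Type*} [Fintype ι] [NormedAddCommGroup E]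
    [InnerProductSpace ℝ E] (b : OrthonormalBasis ι ℝ E) {Ω : Set E} {w : ι → ℝ}
    (h : ∀ x ∈ Ω, ∀ y ∈ Ω, ∀ j, ⟪b j, x⟫_ℝ - ⟪b j, y⟫_ℝ ≤ w j) :
    Metric.ediam Ω ≤ ENNReal.ofReal √(∑ j, w j ^ 2) := by
  refine Metric.ediam_le fun x hx y hy => ?_
  rw [edist_dist, dist_eq_norm, ← Real.sqrt_sq (norm_nonneg _), ← b.sum_sq_inner_right]
  gcongr ENNReal.ofReal √(∑ j, ?_) with j
  rw [inner_sub_right]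
  exact sq_le_sq' (by linarith [h y hy x hx j]) (h x hx y hy j)

section DotProduct

variable {ι : Type*} [Fintype ι]

lemma dotProduct_self_le_of_abs_le {v w : ι → ℝ} (h : ∀ i, |v i| ≤ w i) : v ⬝ᵥ v ≤ w ⬝ᵥ w :=
  Finset.sum_le_sum fun i _ =>
    mul_self_le_mul_self_of_le_of_neg_le (abs_le.mp (h i)).2 (by linarith [(abs_le.mp (h i)).1])

lemma dotProduct_mulVec_self_le_of_isIdempotentElem {P : Matrix ι ι ℝ} (hsymm : P.IsSymm)
    (hidem : IsIdempotentElem P) (v : ι → ℝ) : (P *ᵥ v) ⬝ᵥ (P *ᵥ v) ≤ v ⬝ᵥ v := by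
  have hself : ∀ w, w ᵥ* P = P *ᵥ w := fun w => by rw [← mulVec_transpose, hsymm.eq]
  have hcross : v ⬝ᵥ P *ᵥ v = (P *ᵥ v) ⬝ᵥ (P *ᵥ v) := by
    rw [dotProduct_mulVec (P *ᵥ v), hself, mulVec_mulVec, hidem.eq, dotProduct_comm]
  have := dotProduct_star_self_nonneg (v - P *ᵥ v)
  simp only [star_trivial, sub_dotProduct, dotProduct_sub, dotProduct_comm (P *ᵥ v) v,
    hcross] at this
  linarith

lemma mul_sq_dotProduct_le_dotProduct_mulVec {S : Matrix ι ι ℝ} (hS : S.PosSemidef)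
    {u : ι → ℝ} {lam : ℝ} (hu : u ⬝ᵥ u = 1) (hSu : S *ᵥ u = lam • u) (d : ι → ℝ) :
    lam * (u ⬝ᵥ d) ^ 2 ≤ d ⬝ᵥ S *ᵥ d := by
  have hsymm : Sᵀ = S := by rw [← conjTranspose_eq_transpose_of_trivial, hS.isHermitian.eq]
  have hSd : u ⬝ᵥ S *ᵥ d = lam * (u ⬝ᵥ d) := by
    rw [dotProduct_mulVec, ← mulVec_transpose, hsymm, hSu, smul_dotProduct, smul_eq_mul]
  -- `(d - (u ⬝ᵥ d) • u) ⬝ᵥ S *ᵥ (d - (u ⬝ᵥ d) • u) = d ⬝ᵥ S *ᵥ d - lam * (u ⬝ᵥ d) ^ 2`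
  have := hS.dotProduct_mulVec_nonneg (d - (u ⬝ᵥ d) • u)
  simp only [star_trivial, mulVec_sub, mulVec_smul, hSu, sub_dotProduct, dotProduct_sub,
    smul_dotProduct, dotProduct_smul, smul_eq_mul, hu, dotProduct_comm d u, hSd] at this
  nlinarith

end DotProduct

lemma norm_toE_sq {n : ℕ} (v : Fin n → ℝ) : ‖toE v‖ ^ 2 = v ⬝ᵥ v := by
  rw [← real_inner_self_eq_norm_sq, EuclideanSpace.inner_eq_star_dotProduct]
  simp [toE]

lemma Qm_isSymm (m : ℕ) : (Qm m).IsSymm := by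
  ext i j
  simp [Qm, onesM, one_apply, eq_comm]

lemma Qm_mulVec_one {m : ℕ} (hm : m ≠ 0) : Qm m *ᵥ 1 = 0 := by
  ext i
  simp [Qm, onesM, mulVec, dotProduct, one_apply, hm]

lemma isIdempotentElem_Qm (m : ℕ) : IsIdempotentElem (Qm m) := by
  have hones : onesM m * onesM m = (m : ℝ) • onesM m := by
    ext i j; simp [onesM, mul_apply]
  rw [IsIdempotentElem, Qm, sub_mul, mul_sub, mul_sub, smul_mul_smul_comm, hones, smul_smul]
  simp only [one_mul, mul_one]
  field_simp
  abel

lemma ne_zero_of_posDef_mul_mul_transpose {ι : Type*} [Fintype ι] [Nonempty ι] {m : ℕ}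
    {A : Matrix ι (Fin m) ℝ} {B : Matrix (Fin m) (Fin m) ℝ} (h : (A * B * Aᵀ).PosDef) :
    m ≠ 0 := by
  rintro rfl
  have hzero : A * B * Aᵀ = 0 := by
    ext i j
    simp [mul_apply]
  simpa [hzero] using h.dotProduct_mulVec_pos (x := 1) one_ne_zero

lemma four_mul_dotProduct_mulVec_le_of_mem_Xd {n m : ℕ} (hm : m ≠ 0)
    {A : Matrix (Fin n) (Fin m) ℝ} {xim xip : Fin m → ℝ} {x y : EuclideanSpace ℝ (Fin n)}
    (hx : x ∈ Xd A xim xip) (hy : y ∈ Xd A xim xip) :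
    4 * ((x - y).ofLp ⬝ᵥ (A * Qm m * Aᵀ) *ᵥ (x - y).ofLp) ≤ ‖toE (xip - xim)‖ ^ 2 := by
  obtain ⟨α, hxlo, hxhi⟩ := hx
  obtain ⟨β, hylo, hyhi⟩ := hy
  set M := Qm m * Aᵀ
  set d := (x - y).ofLp
  set zx := Qm m *ᵥ omegaV A - (2 : ℝ) • M *ᵥ x + α • 1
  set zy := Qm m *ᵥ omegaV A - (2 : ℝ) • M *ᵥ y + β • 1
  have hQe : Qm m *ᵥ (zx - zy) = (-2 : ℝ) • M *ᵥ d := by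
    have he : zx - zy = (-2 : ℝ) • M *ᵥ d + (α - β) • 1 := by
      simp only [zx, zy, d, WithLp.ofLp_sub, mulVec_sub]
      module
    rw [he, mulVec_add, mulVec_smul, mulVec_smul, Qm_mulVec_one hm, mulVec_mulVec,
      ← Matrix.mul_assoc, (isIdempotentElem_Qm m).eq, smul_zero, add_zero]
  have hquad : d ⬝ᵥ (A * Qm m * Aᵀ) *ᵥ d = (M *ᵥ d) ⬝ᵥ (M *ᵥ d) := by
    have hS : A * Qm m * Aᵀ = Mᵀ * M := by
      rw [transpose_mul, transpose_transpose, (Qm_isSymm m).eq]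
      conv_lhs => rw [← (isIdempotentElem_Qm m).eq]
      simp only [M, Matrix.mul_assoc]
    rw [hS, ← mulVec_mulVec, dotProduct_mulVec, vecMul_transpose]
  have he : (zx - zy) ⬝ᵥ (zx - zy) ≤ (xip - xim) ⬝ᵥ (xip - xim) :=
    dotProduct_self_le_of_abs_le fun i => by
      rw [Pi.sub_apply, Pi.sub_apply, abs_sub_le_iff]
      constructor <;> linarith [hxlo i, hxhi i, hylo i, hyhi i]
  calc 4 * (d ⬝ᵥ (A * Qm m * Aᵀ) *ᵥ d) = (Qm m *ᵥ (zx - zy)) ⬝ᵥ (Qm m *ᵥ (zx - zy)) := by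
        rw [hQe, hquad, smul_dotProduct, dotProduct_smul]; simp only [smul_eq_mul]; ring
    _ ≤ (zx - zy) ⬝ᵥ (zx - zy) :=
        dotProduct_mulVec_self_le_of_isIdempotentElem (Qm_isSymm m) (isIdempotentElem_Qm m) _
    _ ≤ _ := he
    _ = _ := (norm_toE_sq _).symm

lemma inner_sub_inner_le_of_mem_Xd {n m : ℕ} (hm : m ≠ 0) {A : Matrix (Fin n) (Fin m) ℝ}
    {xim xip : Fin m → ℝ} (hS : (A * Qm m * Aᵀ).PosSemidef) {v : EuclideanSpace ℝ (Fin n)}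
    {lam : ℝ} (hlam : 0 < lam) (hv : ⟪v, v⟫_ℝ = 1) (heig : toE ((A * Qm m * Aᵀ) *ᵥ v) = lam • v)
    {x y : EuclideanSpace ℝ (Fin n)} (hx : x ∈ Xd A xim xip) (hy : y ∈ Xd A xim xip) :
    ⟪v, x⟫_ℝ - ⟪v, y⟫_ℝ ≤ ‖toE (xip - xim)‖ / (2 * √lam) := by
  have hq : ⟪v, x⟫_ℝ - ⟪v, y⟫_ℝ = v.ofLp ⬝ᵥ (x - y).ofLp := by
    rw [← inner_sub_right, EuclideanSpace.inner_eq_star_dotProduct, star_trivial, dotProduct_comm]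
  have hv' : v.ofLp ⬝ᵥ v.ofLp = 1 := by
    rwa [EuclideanSpace.inner_eq_star_dotProduct, star_trivial] at hv
  have hlower := mul_sq_dotProduct_le_dotProduct_mulVec hS hv' (congrArg WithLp.ofLp heig)
    (x - y).ofLp
  have hupper := four_mul_dotProduct_mulVec_le_of_mem_Xd hm hx hy
  rw [hq, le_div_iff₀ (by positivity), mul_comm]
  refine abs_le_of_sq_le_sq' ?_ (norm_nonneg _) |>.2
  rw [mul_pow, mul_pow, Real.sq_sqrt hlam.le]
  linarith

lemma isBounded_Hset {n m : ℕ} (hm : m ≠ 0) (A : Matrix (Fin n) (Fin m) ℝ) (xip : Fin m → ℝ) :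
    Bornology.IsBounded (Hset A xip) :=
  let i : Fin m := ⟨0, Nat.pos_of_ne_zero hm⟩
  Metric.isBounded_closedBall.subset fun _ hx => mem_closedBall_iff_norm.mpr (hx i)

section SupportFunction

variable {n : ℕ} {Ω : Set (EuclideanSpace ℝ (Fin n))}

lemma inner_le_suppF (hΩ : Bornology.IsBounded Ω) (v : EuclideanSpace ℝ (Fin n))
    {x : EuclideanSpace ℝ (Fin n)} (hx : x ∈ Ω) : ⟪v, x⟫_ℝ ≤ suppF Ω v :=
  le_csSup ((innerSL ℝ v).lipschitz.isBounded_image hΩ).bddAbove (Set.mem_image_of_mem _ hx)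

lemma inner_sub_inner_le_psiH (hΩ : Bornology.IsBounded Ω) (v : EuclideanSpace ℝ (Fin n))
    {x y : EuclideanSpace ℝ (Fin n)} (hx : x ∈ Ω) (hy : y ∈ Ω) :
    ⟪v, x⟫_ℝ - ⟪v, y⟫_ℝ ≤ psiH Ω v := by
  have hneg := inner_le_suppF hΩ (-v) hy
  rw [inner_neg_left] at hneg
  linarith [inner_le_suppF hΩ v hx, show psiH Ω v = suppF Ω v + suppF Ω (-v) from rfl]

end SupportFunction

theorem stmt15_general {n m : ℕ} (A : Matrix (Fin n) (Fin m) ℝ) (xim xip : Fin m → ℝ)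
    (hpd : (A * Qm m * Aᵀ).PosDef)
    (u : Fin n → EuclideanSpace ℝ (Fin n)) (lam : Fin n → ℝ)
    (horth : ∀ i j, ⟪u i, u j⟫_ℝ = if i = j then 1 else 0)
    (hlam : ∀ j, 0 < lam j)
    (heig : ∀ j, toE ((A * Qm m * Aᵀ).mulVec (u j)) = lam j • u j) :
    (∃ c : Fin n → ℝ, ∀ x ∈ Xd A xim xip ∩ Hset A xip, ∀ j,
        c j ≤ ⟪u j, x⟫_ℝ ∧ ⟪u j, x⟫_ℝ ≤ c j +
          min (‖toE (xip - xim)‖ / (2 * Real.sqrt (lam j))) (psiH (Hset A xip) (u j))) ∧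
      EMetric.diam (Xd A xim xip ∩ Hset A xip) ≤
        ENNReal.ofReal (Real.sqrt (∑ j,
          (min (‖toE (xip - xim)‖ / (2 * Real.sqrt (lam j)))
            (psiH (Hset A xip) (u j))) ^ 2)) := by
  have hwidth : ∀ x ∈ Xd A xim xip ∩ Hset A xip, ∀ y ∈ Xd A xim xip ∩ Hset A xip, ∀ j,
      ⟪u j, x⟫_ℝ - ⟪u j, y⟫_ℝ ≤
        min (‖toE (xip - xim)‖ / (2 * √(lam j))) (psiH (Hset A xip) (u j)) := by
    intro x hx y hy j
    have : Nonempty (Fin n) := ⟨j⟩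
    have hm := ne_zero_of_posDef_mul_mul_transpose hpd
    exact le_min (inner_sub_inner_le_of_mem_Xd hm hpd.posSemidef (hlam j)
        (by rw [horth, if_pos rfl]) (heig j) hx.1 hy.1)
      (inner_sub_inner_le_psiH (isBounded_Hset hm A xip) (u j) hx.2 hy.2)
  have hON : Orthonormal ℝ u := orthonormal_iff_ite.mpr horth
  let b : OrthonormalBasis (Fin n) ℝ (EuclideanSpace ℝ (Fin n)) :=
    .mk hON (hON.linearIndependent.span_eq_top_of_card_eq_finrank' (by simp)).ge
  exact ⟨exists_forall_le_and_le_add_of_forall_sub_le hwidth,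
    ediam_le_of_forall_inner_sub_le b (by simpa only [b, OrthonormalBasis.coe_mk] using hwidth)⟩

/-- Let S(A) ≻ 0 with orthonormal eigenvectors u₁,…,uₙ and eigenvalues
λ₁,…,λₙ > 0, and let 𝒳 = 𝒳_d ∩ ℋ be nonempty. With
b_j = min{‖w‖₂/(2√λ_j), ψ_ℋ(u_j)}, the set 𝒳 is contained in an orthogonal box with axes u_j
and side lengths b_j, and consequently diam(𝒳) ≤ (Σⱼ b_j²)^{1/2}. -/
theorem stmt15 {n m : ℕ} (A : Matrix (Fin n) (Fin m) ℝ) (xim xip : Fin m → ℝ)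
    (hle : xim ≤ xip) (hxip : ∀ i, 0 ≤ xip i)
    (hpd : (A * Qm m * Aᵀ).PosDef)
    (u : Fin n → EuclideanSpace ℝ (Fin n)) (lam : Fin n → ℝ)
    (horth : ∀ i j, ⟪u i, u j⟫_ℝ = if i = j then 1 else 0)
    (hlam : ∀ j, 0 < lam j)
    (heig : ∀ j, toE ((A * Qm m * Aᵀ).mulVec (u j)) = lam j • u j)
    (hne : (Xd A xim xip ∩ Hset A xip).Nonempty) :
    (∃ c : Fin n → ℝ, ∀ x ∈ Xd A xim xip ∩ Hset A xip, ∀ j,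
        c j ≤ ⟪u j, x⟫_ℝ ∧ ⟪u j, x⟫_ℝ ≤ c j +
          min (‖toE (xip - xim)‖ / (2 * Real.sqrt (lam j))) (psiH (Hset A xip) (u j))) ∧
      EMetric.diam (Xd A xim xip ∩ Hset A xip) ≤
        ENNReal.ofReal (Real.sqrt (∑ j,
          (min (‖toE (xip - xim)‖ / (2 * Real.sqrt (lam j)))
            (psiH (Hset A xip) (u j))) ^ 2)) :=
  stmt15_general A xim xip hpd u lam horth hlam heig
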